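/- Let F be a finite field of size q and characteristic p, and let d be a positive integer such that p does not divide d+2. Define f(x,s) = x^{d+2} + Σ_{i=1}^{d} s_i x^i for x ∈ F and s = (s_1,...,s_d) ∈ F^d. Then for any s ∈ F^d and any (Δ_s, Δ_x, Δ_f) ∈ F^d × F × F with (Δ_s, Δ_x, Δ_f) ≠ (0,0,0), the probability over a uniformly random x ∈ F that f(s + Δ_s, x + Δ_x) = f(s, x) + Δ_f is at most (d+1)/q. -/
import Mathlib

open Polynomial

theorem stmt_0 {F : Type*} [Field F] [Fintype F] [DecidableEq F]
    (q p d : ℕ) (hq : Fintype.card F = q) (hp : CharP F p) (hd : 0 < d)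
    (hdiv : ¬ p ∣ (d + 2))
    (s Δs : Fin d → F) (Δx Δf : F)
    (hne : ¬ (Δs = 0 ∧ Δx = 0 ∧ Δf = 0)) :
    ((Finset.univ.filter fun x : F =>
        (x + Δx) ^ (d + 2) + ∑ i : Fin d, (s i + Δs i) * (x + Δx) ^ ((i : ℕ) + 1)
          = x ^ (d + 2) + (∑ i : Fin d, s i * x ^ ((i : ℕ) + 1)) + Δf).card : ℝ) / q
      ≤ (d + 1) / q := by
  have hq0 : 0 < q := hq ▸ Fintype.card_pos
  set P : F[X] := (X + C Δx) ^ (d + 2)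
      + ∑ i : Fin d, C (s i + Δs i) * (X + C Δx) ^ ((i : ℕ) + 1)
      - (X ^ (d + 2) + (∑ i : Fin d, C (s i) * X ^ ((i : ℕ) + 1)) + C Δf) with hP
  have hdeg : P.natDegree ≤ d + 1 := by
    rw [Polynomial.natDegree_le_iff_coeff_eq_zero]
    intro m hm
    simp only [hP, coeff_sub, coeff_add, coeff_X_add_C_pow, finset_sum_coeff,
      coeff_C_mul, coeff_X_pow, coeff_C]
    have hc : ∀ i : Fin d, (((i : ℕ) + 1).choose m : F) = 0 := fun i => by
      rw [Nat.choose_eq_zero_of_lt (by omega)]; simp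
    have hc2 : ∀ i : Fin d, ¬ (m = (i : ℕ) + 1) := fun i => by omega
    have key : Δx ^ (d + 2 - m) * (((d + 2).choose m : ℕ) : F)
        = if m = d + 2 then 1 else 0 := by
      rcases eq_or_lt_of_le (show d + 2 ≤ m by omega) with h | h
      · simp [← h]
      · rw [Nat.choose_eq_zero_of_lt h]; simp [show ¬ (m = d + 2) by omega]
    rw [key]
    simp only [hc, mul_zero, Finset.sum_const_zero, add_zero]
    rw [Finset.sum_eq_zero (fun i _ => by rw [if_neg (hc2 i), mul_zero])]
    simp [show ¬ (m = 0) by omega]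
  have hPne : P ≠ 0 := by
    by_cases hΔx : Δx = 0
    · subst hΔx
      have hor : Δs ≠ 0 ∨ Δf ≠ 0 := by
        by_contra h; push_neg at h; exact hne ⟨h.1, rfl, h.2⟩
      rcases hor with hs | hf
      · obtain ⟨j, hj⟩ := Function.ne_iff.mp hs
        have hcoeff : P.coeff ((j : ℕ) + 1) = Δs j := by
          simp only [hP, map_zero, add_zero, coeff_sub, coeff_add, finset_sum_coeff,
            coeff_C_mul, coeff_X_pow, coeff_C]
          simp only [add_left_inj, Fin.val_eq_val, mul_ite, mul_one, mul_zero,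
            Finset.sum_ite_eq, Finset.mem_univ, if_true,
            if_neg (show ¬ ((j : ℕ) + 1 = d + 2) by omega),
            if_neg (show ¬ ((j : ℕ) + 1 = 0) by omega)]
          ring
        intro h; rw [h] at hcoeff; simp at hcoeff; exact hj (by simpa using hcoeff.symm)
      · have hcoeff : P.coeff 0 = -Δf := by
          simp only [hP, map_zero, add_zero, coeff_sub, coeff_add, finset_sum_coeff,
            coeff_C_mul, coeff_X_pow, coeff_C]
          have h1 : ¬ ((0 : ℕ) = d + 2) := by omega
          have h2 : ∀ i : Fin d, ¬ ((0 : ℕ) = (i : ℕ) + 1) := fun i => by omega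
          simp [h1, h2]
        intro h; rw [h] at hcoeff; simp at hcoeff; exact hf hcoeff
    · have hcast : ((d : F) + 2) ≠ 0 := by
        intro h
        apply hdiv
        rw [← CharP.cast_eq_zero_iff F p (d + 2)]
        push_cast
        exact h
      have hcoeff : P.coeff (d + 1) = Δx * ((d : F) + 2) := by
        simp only [hP, coeff_sub, coeff_add, coeff_X_add_C_pow, finset_sum_coeff,
          coeff_C_mul, coeff_X_pow, coeff_C]
        have hc : ∀ i : Fin d, (((i : ℕ) + 1).choose (d + 1) : F) = 0 := fun i => by
          rw [Nat.choose_eq_zero_of_lt (by omega)]; simp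
        have hc2 : ∀ i : Fin d, ¬ (d + 1 = (i : ℕ) + 1) := fun i => by omega
        simp only [hc, mul_zero, Finset.sum_const_zero, add_zero]
        rw [Finset.sum_eq_zero (fun i _ => by rw [if_neg (hc2 i), mul_zero])]
        have e1 : (d + 2).choose (d + 1) = d + 2 := by
          rw [show d + 2 = (d + 1) + 1 from rfl, Nat.choose_succ_self_right]
        have e2 : d + 2 - (d + 1) = 1 := by omega
        rw [e1, e2]
        simp only [if_neg (show ¬ (d + 1 = d + 2) by omega),
          if_neg (show ¬ (d + 1 = 0) by omega)]
        push_cast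
        ring
      intro h
      rw [h] at hcoeff
      simp at hcoeff
      rcases hcoeff with h | h
      · exact hΔx h
      · exact hcast h
  have hsub : (Finset.univ.filter fun x : F =>
        (x + Δx) ^ (d + 2) + ∑ i : Fin d, (s i + Δs i) * (x + Δx) ^ ((i : ℕ) + 1)
          = x ^ (d + 2) + (∑ i : Fin d, s i * x ^ ((i : ℕ) + 1)) + Δf)
      ⊆ P.roots.toFinset := by
    intro x hx
    simp only [Finset.mem_filter] at hx
    have hev : P.eval x = 0 := by
      simp only [hP, eval_sub, eval_add, eval_pow, eval_finset_sum, eval_mul, eval_C, eval_X]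
      rw [sub_eq_zero]
      exact hx.2
    exact Multiset.mem_toFinset.mpr ((mem_roots hPne).mpr hev)
  have hcard : (Finset.univ.filter fun x : F =>
        (x + Δx) ^ (d + 2) + ∑ i : Fin d, (s i + Δs i) * (x + Δx) ^ ((i : ℕ) + 1)
          = x ^ (d + 2) + (∑ i : Fin d, s i * x ^ ((i : ℕ) + 1)) + Δf).card ≤ d + 1 :=
    le_trans (Finset.card_le_card hsub)
      (le_trans (P.roots.toFinset_card_le) (le_trans P.card_roots' hdeg))
  have hR : ((Finset.univ.filter fun x : F =>
        (x + Δx) ^ (d + 2) + ∑ i : Fin d, (s i + Δs i) * (x + Δx) ^ ((i : ℕ) + 1)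
          = x ^ (d + 2) + (∑ i : Fin d, s i * x ^ ((i : ℕ) + 1)) + Δf).card : ℝ)
      ≤ (d : ℝ) + 1 := by exact_mod_cast hcard
  gcongr
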